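/- arXiv:2105.14254 — 4 statements merged into one kernel-verified Lean document; each statement's English description precedes it below -/
import Mathlib

section
/- Let W be a Weyl group with left weak Bruhat order ≤_L characterized by v ≤_L w iff Φ(v) ⊆ Φ(w). Suppose there is a 'diamond': four elements d ≤_L b, d ≤_L c, b ≤_L a, c ≤_L a with b ≠ c, where each covering relation is labeled by simple roots: b = s_α d, c = s_β d, a = s_γ b, a = s_δ c (with each step increasing length by 1). Then α = δ, β = γ, and s_α s_β = s_β s_α. -/
/-!
STATEMENT 1 (diamond lemma in the left weak Bruhat order).  Setting: a reduced
crystallographic root system `Φ` with positive system `Φ⁺` in a finite-dimensional real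
inner product space; the Weyl group `W` is generated by the reflections `s_β` in the roots;
simple roots are the indecomposable positive roots; the left weak order is characterized by
inclusion of inversion sets `Φ(v) = Φ⁺ ∩ v⁻¹(Φ⁻)`, and a weak covering relation `v ⋖ w`
(with label a simple root `α`) means `w = s_α v` together with `ℓ(w) = ℓ(v) + 1`, lengths
being the cardinalities of inversion sets (`#Φ(u) = ℓ(u)`).

Claim: in a diamond `d ⋖ b = s_α d`, `d ⋖ c = s_β d`, `b ⋖ a = s_γ b`, `c ⋖ a = s_δ c`
with `b ≠ c` and labels `α, β, γ, δ` simple, one has `α = δ`, `β = γ`, and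
`s_α s_β = s_β s_α`.
-/

open scoped RealInnerProductSpace

variable {V : Type*} [NormedAddCommGroup V] [InnerProductSpace ℝ V] [FiniteDimensional ℝ V]

/-- The orthogonal reflection `s_β` in the hyperplane orthogonal to `β`. -/
noncomputable def rootReflection (β : V) : V ≃ₗᵢ[ℝ] V := Submodule.reflection ((ℝ ∙ β)ᗮ)

/-- The inversion set `Φ(u) = Φ⁺ ∩ u⁻¹(Φ⁻)` of `u`. -/
noncomputable def inversionSet [DecidableEq V] (Φplus : Finset V) (u : V ≃ₗᵢ[ℝ] V) :
    Finset V :=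
  Φplus.filter (fun β => -(u β) ∈ Φplus)

/-- `α` is a simple root for the positive system `Φ⁺`: it is a positive root which is not
the sum of two positive roots. -/
def IsSimpleRoot (Φplus : Finset V) (α : V) : Prop :=
  α ∈ Φplus ∧ ∀ β ∈ Φplus, ∀ γ ∈ Φplus, α ≠ β + γ


/-!
For a simple root `α`, the reflection `s_α` permutes `Φ⁺ \ {α}` (an `α`-string argument, using only
that `α` is indecomposable), so `Φ(s_α u) ⊆ Φ(u) ∪ {u⁻¹ α}`, with equality when the length goes up.
Going up the diamond on both sides adds two roots to `Φ(d)`; the root `d⁻¹ β` added on the right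
must be the root `b⁻¹ γ` added last on the left, whence `γ = s_α β`, and symmetrically
`δ = s_β α`. Distinct simple roots make an obtuse angle, while `⟪s_α β, α⟫ = -⟪β, α⟫`; so
`⟪α, β⟫ = 0`, each reflection fixes the other root, and `s_α`, `s_β` commute.
-/

set_option linter.unusedSectionVars false

theorem rootReflection_apply (β v : V) :
    rootReflection β v = v - (2 * ⟪β, v⟫ / ⟪β, β⟫) • β := by
  rw [rootReflection, Submodule.reflection_orthogonal_apply,
    Submodule.reflection_singleton_apply, real_inner_self_eq_norm_sq, neg_sub, mul_div_assoc,
    mul_smul, ofNat_smul_eq_nsmul ℝ]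
  rfl

theorem rootReflection_self (β : V) : rootReflection β β = -β :=
  Submodule.reflection_orthogonalComplement_singleton_eq_neg β

theorem rootReflection_rootReflection (β v : V) : rootReflection β (rootReflection β v) = v :=
  Submodule.reflection_reflection _ v

theorem rootReflection_eq_self_of_inner_eq_zero {β v : V} (h : ⟪β, v⟫ = 0) :
    rootReflection β v = v := by
  simp [rootReflection_apply, h]

theorem inner_rootReflection_self (β v : V) :
    ⟪rootReflection β v, β⟫ = -⟪v, β⟫ := by
  have h := (rootReflection β).inner_map_map v β
  rw [rootReflection_self, inner_neg_right] at h
  linarith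

theorem rootReflection_mul_comm_of_inner_eq_zero {α β : V} (h : ⟪α, β⟫ = 0) :
    rootReflection α * rootReflection β = rootReflection β * rootReflection α := by
  have key : ∀ x y : V, ⟪x, y⟫ = 0 → ∀ v, rootReflection x (rootReflection y v) =
      v - (2 * ⟪y, v⟫ / ⟪y, y⟫) • y - (2 * ⟪x, v⟫ / ⟪x, x⟫) • x := by
    intro x y hxy v
    rw [rootReflection_apply y v, rootReflection_apply x, inner_sub_right,
      real_inner_smul_right, hxy, mul_zero, sub_zero]
  ext v
  change rootReflection α (rootReflection β v) = rootReflection β (rootReflection α v)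
  rw [key α β h, key β α (by rwa [real_inner_comm]), sub_right_comm]

theorem apply_mem_of_mem_closure_rootReflection {Φ : Finset V}
    (hstable : ∀ β ∈ Φ, ∀ γ ∈ Φ, rootReflection β γ ∈ Φ) {u : V ≃ₗᵢ[ℝ] V}
    (hu : u ∈ Subgroup.closure {g : V ≃ₗᵢ[ℝ] V | ∃ β ∈ Φ, g = rootReflection β})
    {v : V} (hv : v ∈ Φ) : u v ∈ Φ := by
  suffices ∀ v, u v ∈ Φ ↔ v ∈ Φ from (this v).2 hv
  induction hu using Subgroup.closure_induction with
  | mem x hx =>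
    obtain ⟨β, hβ, rfl⟩ := hx
    exact fun v => ⟨fun hv => rootReflection_rootReflection β v ▸ hstable β hβ _ hv,
      hstable β hβ v⟩
  | one => simp
  | mul x y _ _ hx hy => exact fun v => (hx (y v)).trans (hy v)
  | inv x _ hx => exact fun v => by rw [← hx (x⁻¹ v)]; simp

structure IsPositiveRootSystem (Φ Φplus : Finset V) : Prop where
  mem_iff : ∀ β : V, β ∈ Φ ↔ (β ∈ Φplus ∨ -β ∈ Φplus)
  neg_notMem : ∀ β ∈ Φplus, -β ∉ Φplus
  add_mem : ∀ β ∈ Φplus, ∀ γ ∈ Φplus, β + γ ∈ Φ → β + γ ∈ Φplus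
  reduced : ∀ β ∈ Φ, ∀ c : ℝ, c • β ∈ Φ → c = 1 ∨ c = -1
  crystallographic : ∀ β ∈ Φ, ∀ γ ∈ Φ, ∃ n : ℤ, 2 * ⟪β, γ⟫ / ⟪γ, γ⟫ = (n : ℝ)
  rootReflection_mem : ∀ β ∈ Φ, ∀ γ ∈ Φ, rootReflection β γ ∈ Φ

namespace IsPositiveRootSystem

variable {Φ Φplus : Finset V} (h : IsPositiveRootSystem Φ Φplus)
include h

theorem mem_of_mem_pos {β : V} (hβ : β ∈ Φplus) : β ∈ Φ := (h.mem_iff β).2 (Or.inl hβ)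

theorem neg_mem {β : V} (hβ : β ∈ Φ) : -β ∈ Φ := by
  rw [h.mem_iff] at hβ ⊢
  rwa [neg_neg, or_comm]

theorem ne_zero {β : V} (hβ : β ∈ Φ) : β ≠ 0 := by
  rintro rfl
  rcases (h.mem_iff 0).1 hβ with h0 | h0 <;>
    exact h.neg_notMem 0 (by simpa using h0) (by simpa using h0)

theorem inner_self_pos {β : V} (hβ : β ∈ Φ) : 0 < ⟪β, β⟫ :=
  real_inner_self_pos.2 (h.ne_zero hβ)

theorem notMem_span_singleton {α β : V} (hα : α ∈ Φplus) (hβ : β ∈ Φplus) (hne : β ≠ α) :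
    β ∉ ℝ ∙ α := by
  rintro hβα
  obtain ⟨c, rfl⟩ := Submodule.mem_span_singleton.1 hβα
  rcases h.reduced α (h.mem_of_mem_pos hα) c (h.mem_of_mem_pos hβ) with rfl | rfl
  · exact hne (one_smul ℝ α)
  · exact h.neg_notMem α hα (by simpa using hβ)

theorem exists_int_rootReflection_eq {β γ : V} (hβ : β ∈ Φ) (hγ : γ ∈ Φ) :
    ∃ n : ℤ, 2 * ⟪β, γ⟫ = n * ⟪γ, γ⟫ ∧ rootReflection γ β = β - (n : ℝ) • γ := by
  obtain ⟨n, hn⟩ := h.crystallographic β hβ γ hγ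
  have hγγ : ⟪γ, γ⟫ ≠ 0 := (h.inner_self_pos hγ).ne'
  refine ⟨n, by rw [← hn, div_mul_cancel₀ _ hγγ], ?_⟩
  rw [rootReflection_apply, real_inner_comm, hn]

/-- Both Cartan integers `2⟪β, γ⟫/⟪γ, γ⟫` and `2⟪γ, β⟫/⟪β, β⟫` are positive and, by the strict
Cauchy–Schwarz inequality, have product `< 4`; so one of them is `1`, and the corresponding
reflection sends `β` to `β - γ` or `γ` to `γ - β`. -/
theorem sub_mem_of_inner_pos {β γ : V} (hβ : β ∈ Φ) (hγ : γ ∈ Φ) (hβγ : β ∉ ℝ ∙ γ)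
    (hpos : 0 < ⟪β, γ⟫) : β - γ ∈ Φ := by
  obtain ⟨n, hn, hnr⟩ := h.exists_int_rootReflection_eq hβ hγ
  obtain ⟨m, hm, hmr⟩ := h.exists_int_rootReflection_eq hγ hβ
  rw [real_inner_comm] at hm
  have hcs : ⟪β, γ⟫ ^ 2 < ⟪β, β⟫ * ⟪γ, γ⟫ := by
    have hlt : ⟪β, γ⟫ < ‖β‖ * ‖γ‖ := by
      refine inner_lt_norm_mul_iff_real.2 fun heq => hβγ (Submodule.mem_span_singleton.2
        ⟨‖β‖ / ‖γ‖, ?_⟩)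
      rw [div_eq_inv_mul, mul_smul, ← heq, inv_smul_smul₀ (norm_ne_zero_iff.2 (h.ne_zero hγ))]
    rw [real_inner_self_eq_norm_sq, real_inner_self_eq_norm_sq]
    nlinarith
  have hββ := h.inner_self_pos hβ
  have hγγ := h.inner_self_pos hγ
  have hn0 : 0 < n := by exact_mod_cast (show (0 : ℝ) < n by nlinarith)
  have hm0 : 0 < m := by exact_mod_cast (show (0 : ℝ) < m by nlinarith)
  have hnm : n * m < 4 := by
    have : (n : ℝ) * m * (⟪β, β⟫ * ⟪γ, γ⟫) < 4 * (⟪β, β⟫ * ⟪γ, γ⟫) := by nlinarith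
    exact_mod_cast lt_of_mul_lt_mul_right this (mul_pos hββ hγγ).le
  obtain rfl | rfl : n = 1 ∨ m = 1 := by
    by_contra! hne
    nlinarith [show 2 ≤ n by omega, show 2 ≤ m by omega]
  · simpa [hnr] using h.rootReflection_mem γ hγ β hβ
  · simpa [hmr] using h.neg_mem (h.rootReflection_mem β hβ γ hγ)

theorem sub_mem_pos_of_inner_pos {α x : V} (hα : IsSimpleRoot Φplus α) (hx : x ∈ Φplus)
    (hxα : x ∉ ℝ ∙ α) (hpos : 0 < ⟪x, α⟫) : x - α ∈ Φplus := by
  have hmem := h.sub_mem_of_inner_pos (h.mem_of_mem_pos hx) (h.mem_of_mem_pos hα.1) hxα hpos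
  refine ((h.mem_iff _).1 hmem).resolve_right fun hneg => ?_
  rw [neg_sub] at hneg
  exact hα.2 _ hneg x hx (sub_add_cancel α x).symm

theorem add_mem_pos_of_inner_neg {α x : V} (hα : α ∈ Φplus) (hx : x ∈ Φplus)
    (hxα : x ∉ ℝ ∙ α) (hneg : ⟪x, α⟫ < 0) : x + α ∈ Φplus := by
  refine h.add_mem x hx α hα ?_
  rw [← sub_neg_eq_add]
  refine h.sub_mem_of_inner_pos (h.mem_of_mem_pos hx) (h.neg_mem (h.mem_of_mem_pos hα))
    (by rwa [← Set.neg_singleton, Submodule.span_neg]) (by rwa [inner_neg_right, neg_pos])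

/-- The `α`-string argument: moving the summand that makes an acute (obtuse) angle with `α`
down (up) by `α` keeps both summands positive and brings `m` closer to `0` or `1`. -/
theorem add_ne_int_smul {α : V} (hα : IsSimpleRoot Φplus α) (m : ℤ) :
    ∀ {x y : V}, x ∈ Φplus → y ∈ Φplus → x ∉ ℝ ∙ α → x + y ≠ (m : ℝ) • α := by
  have hαα := h.inner_self_pos (h.mem_of_mem_pos hα.1)
  have hα_mem : α ∈ ℝ ∙ α := Submodule.mem_span_singleton_self α
  have notMem_of_add_eq : ∀ {x y : V} {c : ℝ}, x ∉ ℝ ∙ α → x + y = c • α → y ∉ ℝ ∙ α :=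
    fun hxα hxy hyα => hxα <| (Submodule.add_mem_iff_left _ hyα).1
      (hxy ▸ Submodule.smul_mem _ _ hα_mem)
  induction m using Int.induction_on with
  | zero =>
    intro x y hx hy _ hxy
    rw [Int.cast_zero, zero_smul, add_eq_zero_iff_eq_neg'] at hxy
    exact h.neg_notMem x hx (hxy ▸ hy)
  | succ i ih =>
    intro x y hx hy hxα hxy
    rcases i.eq_zero_or_pos with rfl | hi
    · exact hα.2 x hx y hy (by simpa using hxy.symm)
    have hsum : 0 < ⟪x, α⟫ + ⟪y, α⟫ := by
      rw [← inner_add_left, hxy, real_inner_smul_left]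
      exact mul_pos (by positivity) hαα
    rcases lt_or_ge 0 ⟪x, α⟫ with hpos | hle
    · refine ih (h.sub_mem_pos_of_inner_pos hα hx hxα hpos) hy
        ((Submodule.sub_mem_iff_left _ hα_mem).not.2 hxα) ?_
      rw [sub_add_eq_add_sub, hxy]
      push_cast
      module
    · refine ih (h.sub_mem_pos_of_inner_pos hα hy (notMem_of_add_eq hxα hxy) (by linarith)) hx
        ((Submodule.sub_mem_iff_left _ hα_mem).not.2 (notMem_of_add_eq hxα hxy)) ?_
      rw [sub_add_eq_add_sub, add_comm, hxy]
      push_cast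
      module
  | pred i ih =>
    intro x y hx hy hxα hxy
    have hsum : ⟪x, α⟫ + ⟪y, α⟫ < 0 := by
      rw [← inner_add_left, hxy, real_inner_smul_left]
      exact mul_neg_of_neg_of_pos (by push_cast; linarith [(i.cast_nonneg : (0 : ℝ) ≤ i)]) hαα
    rcases lt_or_ge ⟪x, α⟫ 0 with hneg | hge
    · refine ih (h.add_mem_pos_of_inner_neg hα.1 hx hxα hneg) hy
        ((Submodule.add_mem_iff_left _ hα_mem).not.2 hxα) ?_
      rw [add_right_comm, hxy]
      push_cast
      module
    · refine ih (h.add_mem_pos_of_inner_neg hα.1 hy (notMem_of_add_eq hxα hxy) (by linarith)) hx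
        ((Submodule.add_mem_iff_left _ hα_mem).not.2 (notMem_of_add_eq hxα hxy)) ?_
      rw [add_right_comm, add_comm y, hxy]
      push_cast
      module

theorem rootReflection_mem_pos {α β : V} (hα : IsSimpleRoot Φplus α) (hβ : β ∈ Φplus)
    (hne : β ≠ α) : rootReflection α β ∈ Φplus := by
  obtain ⟨n, -, hnr⟩ := h.exists_int_rootReflection_eq (h.mem_of_mem_pos hβ)
    (h.mem_of_mem_pos hα.1)
  have hmem := h.rootReflection_mem α (h.mem_of_mem_pos hα.1) β (h.mem_of_mem_pos hβ)
  refine ((h.mem_iff _).1 hmem).resolve_right fun hneg => ?_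
  exact h.add_ne_int_smul hα n hβ hneg (h.notMem_span_singleton hα.1 hβ hne)
    (by rw [hnr]; abel)

theorem inner_nonpos_of_isSimpleRoot {α β : V} (hα : IsSimpleRoot Φplus α)
    (hβ : IsSimpleRoot Φplus β) (hne : α ≠ β) : ⟪α, β⟫ ≤ 0 := by
  by_contra! hpos
  exact hα.2 _ (h.sub_mem_pos_of_inner_pos hβ hα.1 (h.notMem_span_singleton hβ.1 hα.1 hne) hpos)
    β hβ.1 (sub_add_cancel α β).symm

theorem inner_eq_zero_of_isSimpleRoot_rootReflection {α β : V} (hα : IsSimpleRoot Φplus α)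
    (hβ : IsSimpleRoot Φplus β) (hne : α ≠ β) (hsβ : IsSimpleRoot Φplus (rootReflection α β)) :
    ⟪β, α⟫ = 0 := by
  have hsβα : rootReflection α β ≠ α := fun heq => by
    have := congrArg (rootReflection α) heq
    rw [rootReflection_rootReflection, rootReflection_self] at this
    exact h.neg_notMem α hα.1 (this ▸ hβ.1)
  have h1 := h.inner_nonpos_of_isSimpleRoot hβ hα hne.symm
  have h2 := h.inner_nonpos_of_isSimpleRoot hsβ hα hsβα
  rw [inner_rootReflection_self] at h2
  linarith

variable [DecidableEq V]

theorem inversionSet_rootReflection_mul_subset {α : V} (hα : IsSimpleRoot Φplus α)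
    {u : V ≃ₗᵢ[ℝ] V} (hu : ∀ v ∈ Φ, u v ∈ Φ) :
    inversionSet Φplus (rootReflection α * u) ⊆ insert (u⁻¹ α) (inversionSet Φplus u) := by
  intro p hp
  simp only [inversionSet, Finset.mem_filter, Finset.mem_insert] at hp ⊢
  obtain ⟨hp, hneg⟩ := hp
  by_cases hup : u p = α
  · exact Or.inl (by rw [← hup]; simp)
  refine Or.inr ⟨hp, ((h.mem_iff _).1 (hu p (h.mem_of_mem_pos hp))).resolve_left fun hpos => ?_⟩
  exact h.neg_notMem _ (h.rootReflection_mem_pos hα hpos hup) hneg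

theorem inversionSet_rootReflection_mul_eq_insert {α : V} (hα : IsSimpleRoot Φplus α)
    {u : V ≃ₗᵢ[ℝ] V} (hu : ∀ v ∈ Φ, u v ∈ Φ)
    (hcard : (inversionSet Φplus (rootReflection α * u)).card
      = (inversionSet Φplus u).card + 1) :
    u⁻¹ α ∉ inversionSet Φplus u ∧
      inversionSet Φplus (rootReflection α * u) = insert (u⁻¹ α) (inversionSet Φplus u) := by
  have hsub := h.inversionSet_rootReflection_mul_subset hα hu
  have heq := Finset.eq_of_subset_of_card_le hsub
    (hcard ▸ Finset.card_insert_le _ _)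
  refine ⟨fun hmem => ?_, heq⟩
  rw [heq, Finset.insert_eq_of_mem hmem] at hcard
  omega

theorem eq_rootReflection_of_diamond {a b c d : V ≃ₗᵢ[ℝ] V} (hd : ∀ v ∈ Φ, d v ∈ Φ)
    {α β γ δ : V} (hα : IsSimpleRoot Φplus α) (hβ : IsSimpleRoot Φplus β)
    (hγ : IsSimpleRoot Φplus γ) (hδ : IsSimpleRoot Φplus δ) (hne : α ≠ β)
    (hb : b = rootReflection α * d)
    (hlb : (inversionSet Φplus b).card = (inversionSet Φplus d).card + 1)
    (hc : c = rootReflection β * d)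
    (hlc : (inversionSet Φplus c).card = (inversionSet Φplus d).card + 1)
    (ha1 : a = rootReflection γ * b)
    (hla1 : (inversionSet Φplus a).card = (inversionSet Φplus b).card + 1)
    (ha2 : a = rootReflection δ * c)
    (hla2 : (inversionSet Φplus a).card = (inversionSet Φplus c).card + 1) :
    γ = rootReflection α β := by
  subst hb hc ha1
  have hpres : ∀ {ε : V}, IsSimpleRoot Φplus ε → ∀ v ∈ Φ, (rootReflection ε * d) v ∈ Φ :=
    fun hε v hv => h.rootReflection_mem _ (h.mem_of_mem_pos hε.1) _ (hd v hv)
  obtain ⟨-, hIb⟩ := h.inversionSet_rootReflection_mul_eq_insert hα hd hlb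
  obtain ⟨hβd, hIc⟩ := h.inversionSet_rootReflection_mul_eq_insert hβ hd hlc
  obtain ⟨-, hIa1⟩ := h.inversionSet_rootReflection_mul_eq_insert hγ (hpres hα) hla1
  rw [ha2] at hla2
  obtain ⟨-, hIa2⟩ := h.inversionSet_rootReflection_mul_eq_insert hδ (hpres hβ) hla2
  have hmem : d⁻¹ β ∈
      insert ((rootReflection α * d)⁻¹ γ) (insert (d⁻¹ α) (inversionSet Φplus d)) := by
    rw [← hIb, ← hIa1, ha2, hIa2, hIc]
    simp
  have hne' : d⁻¹ β ≠ d⁻¹ α := fun heq => hne (d⁻¹.injective heq).symm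
  simp only [Finset.mem_insert, hne', hβd, or_false] at hmem
  calc γ = (rootReflection α * d) ((rootReflection α * d)⁻¹ γ) := by simp
    _ = rootReflection α β := by rw [← hmem]; simp

end IsPositiveRootSystem

theorem statement1 [DecidableEq V] (Φ Φplus : Finset V)
    (hsplit : ∀ β : V, β ∈ Φ ↔ (β ∈ Φplus ∨ -β ∈ Φplus))
    (hdisj : ∀ β ∈ Φplus, -β ∉ Φplus)
    (hclosed : ∀ β ∈ Φplus, ∀ γ ∈ Φplus, β + γ ∈ Φ → β + γ ∈ Φplus)
    (hreduced : ∀ β ∈ Φ, ∀ c : ℝ, c • β ∈ Φ → c = 1 ∨ c = -1)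
    (hcrys : ∀ β ∈ Φ, ∀ γ ∈ Φ, ∃ n : ℤ, 2 * ⟪β, γ⟫ / ⟪γ, γ⟫ = (n : ℝ))
    (hstable : ∀ β ∈ Φ, ∀ γ ∈ Φ, rootReflection β γ ∈ Φ)
    -- the four vertices of the diamond lie in the Weyl group:
    (a b c d : V ≃ₗᵢ[ℝ] V)
    (hd : d ∈ Subgroup.closure {g : V ≃ₗᵢ[ℝ] V | ∃ β ∈ Φ, g = rootReflection β})
    -- the labels are simple roots:
    (α β γ δ : V)
    (hα : IsSimpleRoot Φplus α) (hβ : IsSimpleRoot Φplus β)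
    (hγ : IsSimpleRoot Φplus γ) (hδ : IsSimpleRoot Φplus δ)
    -- the four weak covering relations, with each step increasing length by one:
    (hb : b = rootReflection α * d)
    (hlb : (inversionSet Φplus b).card = (inversionSet Φplus d).card + 1)
    (hc : c = rootReflection β * d)
    (hlc : (inversionSet Φplus c).card = (inversionSet Φplus d).card + 1)
    (ha1 : a = rootReflection γ * b)
    (hla1 : (inversionSet Φplus a).card = (inversionSet Φplus b).card + 1)
    (ha2 : a = rootReflection δ * c)
    (hla2 : (inversionSet Φplus a).card = (inversionSet Φplus c).card + 1)
    (hbc : b ≠ c) :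
    α = δ ∧ β = γ ∧
      rootReflection α * rootReflection β = rootReflection β * rootReflection α := by

  have h : IsPositiveRootSystem Φ Φplus := ⟨hsplit, hdisj, hclosed, hreduced, hcrys, hstable⟩
  have hd' : ∀ v ∈ Φ, d v ∈ Φ := fun v hv => apply_mem_of_mem_closure_rootReflection hstable hd hv
  have hne : α ≠ β := by rintro rfl; exact hbc (hb.trans hc.symm)
  have hγ_eq := h.eq_rootReflection_of_diamond hd' hα hβ hγ hδ hne hb hlb hc hlc ha1 hla1 ha2 hla2
  have hδ_eq :=
    h.eq_rootReflection_of_diamond hd' hβ hα hδ hγ hne.symm hc hlc hb hlb ha2 hla2 ha1 hla1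
  have hβα : ⟪β, α⟫ = 0 := h.inner_eq_zero_of_isSimpleRoot_rootReflection hα hβ hne (hγ_eq ▸ hγ)
  have hαβ : ⟪α, β⟫ = 0 := by rwa [real_inner_comm]
  refine ⟨?_, ?_, rootReflection_mul_comm_of_inner_eq_zero hαβ⟩
  · rw [hδ_eq, rootReflection_eq_self_of_inner_eq_zero hβα]
  · rw [hγ_eq, rootReflection_eq_self_of_inner_eq_zero hαβ]
end

section
/- Let W be a Weyl group, w ∈ W, α a simple root, γ a positive root with s_α w ≠ w s_γ. Assume ℓ(w s_γ) = ℓ(w) + 1 and ℓ(s_α w) = ℓ(w) + 1 (so that w s_γ and s_α w both cover w, the first in strong Bruhat order, the second in left weak order). Then ℓ(s_α w s_γ) = ℓ(w) + 2, and s_α w s_γ covers both w s_γ (in left weak order, via s_α) and s_α w (in strong Bruhat order, via right multiplication by s_γ). -/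
/-!
The sign cocycle of Tits: with `δ_x = Pi.mulSingle x (-1)`, sending `s i` to `(δ_{s i}, s i)` in
`(W → ℤˣ) ⋊ W`, where `W` acts by conjugating the argument, respects the Coxeter relations, so it
defines `η : W → W → ℤˣ` with `η (u * v) x = η u x * η v (u⁻¹ * x * u)`. Induction along a reduced
word shows that `η w t = -1` exactly when the reflection `t` is a left inversion of `w`.

If `ℓ (s w t) < ℓ (s w)`, then `(s w) t (s w)⁻¹` is a left inversion of `s w`, and the cocycle
identity writes its sign as `δ_s ((s w) t (s w)⁻¹) * η w (w t w⁻¹)`. The second factor is `1`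
because `ℓ w < ℓ (w t)`, so `(s w) t (s w)⁻¹ = s`, that is `s w t = w`, which `s w ≠ w t` rules
out. Hence `ℓ (s w t) = ℓ (w t) + 1 = ℓ w + 2`.
-/

def conjPrecomp (W A : Type*) [Group W] [Mul A] : W →* MulAut (W → A) where
  toFun u := MulEquiv.arrowCongr (MulAut.conj u).toEquiv (MulEquiv.refl A)
  map_one' := by
    ext f x
    show f (1⁻¹ * x * 1) = f x
    simp
  map_mul' u v := by
    ext f x
    show f ((u * v)⁻¹ * x * (u * v)) = f (v⁻¹ * (u⁻¹ * x * u) * v)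
    simp [mul_assoc]

section

variable {W A : Type*} [Group W]

theorem conjPrecomp_apply [Mul A] (u : W) (f : W → A) (x : W) :
    conjPrecomp W A u f x = f (u⁻¹ * x * u) := rfl

theorem conjPrecomp_mulSingle [DecidableEq W] [MulOneClass A] (u x : W) (a : A) :
    conjPrecomp W A u (Pi.mulSingle x a) = Pi.mulSingle (u * x * u⁻¹) a :=
  Pi.mulSingle_comp_equiv (MulAut.conj u).symm.toEquiv x a

theorem pow_mul_mul_inv_pow_of_conj_eq_inv {s p : W} (h : s * p * s⁻¹ = p⁻¹) (n : ℕ) :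
    p ^ n * s * (p ^ n)⁻¹ = p ^ (2 * n) * s := by
  have h' : s * p⁻¹ * s⁻¹ = p := by
    rw [show s * p⁻¹ * s⁻¹ = (s * p * s⁻¹)⁻¹ by group, h, inv_inv]
  have hn : s * (p ^ n)⁻¹ * s⁻¹ = p ^ n := by rw [← inv_pow, ← conj_pow, h']
  calc p ^ n * s * (p ^ n)⁻¹ = p ^ n * (s * (p ^ n)⁻¹ * s⁻¹) * s := by group
    _ = p ^ (2 * n) * s := by rw [hn, two_mul, pow_add]

end

namespace CoxeterSystem

variable {B W : Type*} [Group W] {M : CoxeterMatrix B} (cs : CoxeterSystem M W)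

section InversionSign

variable [DecidableEq W]

abbrev SignSemidirect (W : Type*) [Group W] := (W → ℤˣ) ⋊[conjPrecomp W ℤˣ] W

def simpleSign (i : B) : SignSemidirect W :=
  ⟨Pi.mulSingle (cs.simple i) (-1), cs.simple i⟩

theorem left_pow_simpleSign_mul (i j : B) (n : ℕ) :
    ((cs.simpleSign i * cs.simpleSign j) ^ n).left =
      ∏ k ∈ Finset.range (2 * n),
        Pi.mulSingle ((cs.simple i * cs.simple j) ^ k * cs.simple i) (-1) := by
  set p := cs.simple i * cs.simple j
  have hp : cs.simple i * p * (cs.simple i)⁻¹ = p⁻¹ := by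
    simp only [p, mul_inv_rev, inv_simple, ← mul_assoc, simple_mul_simple_self, one_mul]
  have hleft : (cs.simpleSign i * cs.simpleSign j).left =
      Pi.mulSingle (cs.simple i) (-1) * Pi.mulSingle (p * cs.simple i) (-1) := by
    rw [SemidirectProduct.mul_left]
    simp [simpleSign, conjPrecomp_mulSingle, p]
  induction n with
  | zero => simp
  | succ n ih =>
    have hright : ((cs.simpleSign i * cs.simpleSign j) ^ n).right = p ^ n :=
      map_pow SemidirectProduct.rightHom _ n
    have hconj := pow_mul_mul_inv_pow_of_conj_eq_inv hp n
    have hconj' : p ^ n * (p * cs.simple i) * (p ^ n)⁻¹ = p ^ (2 * n + 1) * cs.simple i := by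
      rw [pow_succ', mul_assoc p, ← hconj]
      group
    rw [pow_succ, SemidirectProduct.mul_left, ih, hright, hleft, map_mul,
      conjPrecomp_mulSingle, conjPrecomp_mulSingle, hconj, hconj', mul_add_one,
      Finset.prod_range_succ, Finset.prod_range_succ, mul_assoc]

theorem isLiftable_simpleSign : M.IsLiftable cs.simpleSign := by
  intro i j
  have hright : ((cs.simpleSign i * cs.simpleSign j) ^ M i j).right = 1 :=
    (map_pow SemidirectProduct.rightHom _ _).trans (cs.simple_mul_simple_pow i j)
  have hleft : ((cs.simpleSign i * cs.simpleSign j) ^ M i j).left = 1 := by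
    have hper : ∀ k, (cs.simple i * cs.simple j) ^ (M i j + k) =
        (cs.simple i * cs.simple j) ^ k := fun k ↦ by rw [pow_add, simple_mul_simple_pow, one_mul]
    rw [left_pow_simpleSign_mul, two_mul, Finset.prod_range_add]
    simp only [hper]
    exact funext fun x ↦ Int.units_mul_self _
  exact SemidirectProduct.ext hleft hright

def signHom : W →* SignSemidirect W :=
  cs.lift ⟨cs.simpleSign, cs.isLiftable_simpleSign⟩

theorem signHom_simple (i : B) : cs.signHom (cs.simple i) = cs.simpleSign i :=
  cs.lift_apply_simple cs.isLiftable_simpleSign i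

theorem right_signHom (w : W) : (cs.signHom w).right = w := by
  have h : SemidirectProduct.rightHom.comp cs.signHom = MonoidHom.id W :=
    cs.ext_simple fun i ↦ by simp [signHom_simple, simpleSign]
  exact DFunLike.congr_fun h w

def inversionSign (w : W) : W → ℤˣ := (cs.signHom w).left

theorem inversionSign_one : cs.inversionSign 1 = 1 := by
  simp [inversionSign]

theorem inversionSign_simple (i : B) :
    cs.inversionSign (cs.simple i) = Pi.mulSingle (cs.simple i) (-1) := by
  simp [inversionSign, signHom_simple, simpleSign]

theorem inversionSign_mul (u v x : W) :
    cs.inversionSign (u * v) x = cs.inversionSign u x * cs.inversionSign v (u⁻¹ * x * u) := by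
  simp [inversionSign, SemidirectProduct.mul_left, right_signHom, conjPrecomp_apply]

theorem inversionSign_inv (w x : W) :
    cs.inversionSign w⁻¹ x = cs.inversionSign w (w * x * w⁻¹) := by
  have h := cs.inversionSign_mul w⁻¹ w x
  rw [inv_mul_cancel, inv_inv, inversionSign_one, Pi.one_apply, eq_comm,
    mul_eq_one_iff_eq_inv, Int.units_inv_eq_self] at h
  exact h

theorem mem_leftInvSeq_of_inversionSign_ne_one {ω : List B} {x : W}
    (h : cs.inversionSign (cs.wordProd ω) x ≠ 1) : x ∈ cs.leftInvSeq ω := by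
  induction ω generalizing x with
  | nil => simp [inversionSign_one] at h
  | cons i ω ih =>
    rw [wordProd_cons, inversionSign_mul, inv_simple, inversionSign_simple] at h
    rw [leftInvSeq, List.mem_cons, List.mem_map]
    by_cases hω : cs.inversionSign (cs.wordProd ω) (cs.simple i * x * cs.simple i) = 1
    · rw [hω, mul_one, Pi.mulSingle_apply] at h
      exact .inl (by_contra fun hx ↦ h (if_neg hx))
    · refine .inr ⟨_, ih hω, ?_⟩
      simp [mul_assoc]

theorem isLeftInversion_of_inversionSign_ne_one {w x : W} (h : cs.inversionSign w x ≠ 1) :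
    cs.IsLeftInversion w x := by
  obtain ⟨ω, hω, rfl⟩ := cs.exists_isReduced w
  exact cs.isLeftInversion_of_mem_leftInvSeq hω (cs.mem_leftInvSeq_of_inversionSign_ne_one h)

theorem inversionSign_self {t : W} (ht : cs.IsReflection t) : cs.inversionSign t t = -1 := by
  obtain ⟨v, i, rfl⟩ := ht
  have h₁ : v⁻¹ * (v * cs.simple i * v⁻¹) * v = cs.simple i := by group
  have h₂ : v * ((v * cs.simple i)⁻¹ * (v * cs.simple i * v⁻¹) * (v * cs.simple i)) * v⁻¹ =
      v * cs.simple i * v⁻¹ := by group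
  rw [inversionSign_mul, inversionSign_mul, inversionSign_inv, h₁, h₂, inversionSign_simple,
    Pi.mulSingle_eq_same, mul_right_comm, Int.units_mul_self, one_mul]

theorem inversionSign_eq_neg_one_iff {w t : W} :
    cs.inversionSign w t = -1 ↔ cs.IsLeftInversion w t := by
  refine ⟨fun h ↦ cs.isLeftInversion_of_inversionSign_ne_one (by rw [h]; decide), ?_⟩
  rintro ⟨ht, hlt⟩
  rw [← Int.units_ne_iff_eq_neg]
  intro hw
  have htw : cs.inversionSign (t * w) t = -1 := by
    rw [inversionSign_mul, ht.inv, ht.mul_self, one_mul, hw, mul_one, cs.inversionSign_self ht]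
  have hgt := (cs.isLeftInversion_of_inversionSign_ne_one (by rw [htw]; decide)).2
  rw [← mul_assoc, ht.mul_self, one_mul] at hgt
  exact lt_asymm hlt hgt

end InversionSign

theorem simple_mul_mul_eq_of_length_lt {w t : W} {i : B} (ht : cs.IsReflection t)
    (hwt : cs.length w < cs.length (w * t))
    (hswt : cs.length (cs.simple i * w * t) < cs.length (cs.simple i * w)) :
    cs.simple i * w * t = w := by
  classical
  set u := cs.simple i * w
  have hu : cs.inversionSign u (u * t * u⁻¹) = -1 := by
    refine cs.inversionSign_eq_neg_one_iff.mpr ⟨ht.conj u, ?_⟩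
    rwa [inv_mul_cancel_right]
  have hw : cs.inversionSign w (w * t * w⁻¹) = 1 := by
    refine (Int.units_eq_one_or _).resolve_right fun h ↦ ?_
    have := (cs.inversionSign_eq_neg_one_iff.mp h).2
    rw [inv_mul_cancel_right] at this
    exact lt_asymm hwt this
  have hs : u * t * u⁻¹ = cs.simple i := by
    have hconj : cs.simple i * (u * t * u⁻¹) * cs.simple i = w * t * w⁻¹ := by
      simp only [u, mul_inv_rev, inv_simple, mul_assoc, simple_mul_simple_cancel_left,
        simple_mul_simple_self, mul_one]
    rw [inversionSign_mul, inv_simple, inversionSign_simple, hconj, hw, mul_one,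
      Pi.mulSingle_apply] at hu
    by_contra hne
    rw [if_neg hne] at hu
    exact absurd hu (by decide)
  calc u * t = u * t * u⁻¹ * u := by group
    _ = w := by rw [hs, simple_mul_simple_cancel_left]

end CoxeterSystem

open CoxeterSystem

theorem statement2 {B : Type*} {W : Type*} [Group W] {M : CoxeterMatrix B}
    (cs : CoxeterSystem M W) (w t : W) (i : B)
    (ht : cs.IsReflection t)
    (hne : cs.simple i * w ≠ w * t)
    (hstrong : cs.length (w * t) = cs.length w + 1)
    (hweak : cs.length (cs.simple i * w) = cs.length w + 1) :
    cs.length (cs.simple i * w * t) = cs.length w + 2 ∧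
    -- `s_α w s_γ` covers `w s_γ` in the left weak order (via `s_α`)
    cs.length (cs.simple i * (w * t)) = cs.length (w * t) + 1 ∧
    -- `s_α w s_γ` covers `s_α w` in the strong Bruhat order (via right mult. by `s_γ`)
    cs.length ((cs.simple i * w) * t) = cs.length (cs.simple i * w) + 1 := by
  have hup : cs.length (cs.simple i * (w * t)) = cs.length (w * t) + 1 := by
    refine (cs.length_simple_mul (w * t) i).resolve_right fun hdown ↦ hne ?_
    have hback := cs.simple_mul_mul_eq_of_length_lt (w := w) (i := i) ht (by omega)
      (by rw [← mul_assoc] at hdown; omega)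
    rw [eq_mul_inv_of_mul_eq hback, ht.inv]
  have hassoc : cs.simple i * w * t = cs.simple i * (w * t) := mul_assoc _ _ _
  refine ⟨?_, hup, ?_⟩ <;> rw [hassoc] <;> omega
end

section
/- Let W be a Weyl group with parabolic subgroup W_P generated by a subset of simple reflections, and W^P the set of minimal length coset representatives of W/W_P. Suppose w ∈ W, α ∈ Δ, γ ∈ Φ⁺ with s_α w ≠ w s_γ, ℓ(s_α w s_γ) = ℓ(w) + 2, ℓ(s_α w) = ℓ(w s_γ) = ℓ(w) + 1. If w s_γ ∈ W^P and s_α w ∈ W^P, then w ∈ W^P and s_α w s_γ ∈ W^P. -/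
/-!
Write `v = s_i w t` and suppose `s_j` were a right descent of `v` for some `j ∈ S`. Then
`s_i (w s_j) r = v s_j` with the reflection `r = s_j t s_j` is shorter than `s_i (w s_j)`, so by
the strong exchange condition either `s_i w s_j r = w s_j`, i.e. `v = w`, or `w s_j r = w t s_j`
is shorter than `w s_j`; both contradict the length hypotheses. The strong exchange condition is
derived from the reflection cocycle: the action of `W` on `W × ZMod 2` in which `s_i` acts by
`(u, ε) ↦ (s_i u s_i, ε + [u = s_i])`.
-/

open CoxeterSystem

/-- `w` is a minimal length representative of its coset `w W_P`, where `W_P` is the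
standard parabolic subgroup generated by the simple reflections indexed by `S`. -/
def IsMinimalCosetRep {B : Type*} {W : Type*} [Group W] {M : CoxeterMatrix B}
    (cs : CoxeterSystem M W) (S : Set B) (w : W) : Prop :=
  ∀ i ∈ S, cs.length (w * cs.simple i) = cs.length w + 1

namespace CoxeterSystem

variable {B W : Type*} [Group W] {M : CoxeterMatrix B} (cs : CoxeterSystem M W)

theorem prod_map_reverse_alternatingWord {G : Type*} [Monoid G] (f : B → G) (i i' : B)
    (m : ℕ) : ((alternatingWord i' i (2 * m)).reverse.map f).prod = (f i * f i') ^ m := by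
  induction m with
  | zero => simp [alternatingWord]
  | succ m ih =>
    rw [mul_add_one, alternatingWord_succ, alternatingWord_succ]
    simp only [List.concat_eq_append, List.reverse_append, List.map_append, List.prod_append, ih]
    simp [pow_succ', mul_assoc]

theorem leftInvSeq_alternatingWord (i i' : B) (p : ℕ) :
    cs.leftInvSeq (alternatingWord i' i (2 * p)) =
      (List.range (2 * p)).map fun k ↦ cs.simple i' * (cs.simple i * cs.simple i') ^ k := by
  refine List.ext_getElem (by simp) fun k hk _ ↦ ?_
  rw [getElem_leftInvSeq_alternatingWord _ _ _ _ _ (by simpa using hk),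
    prod_alternatingWord_eq_mul_pow]
  simp [Nat.mul_add_div]

section ReflectionCocycle

variable [DecidableEq W]

def reflectionPerm (i : B) : Equiv.Perm (W × ZMod 2) :=
  Function.Involutive.toPerm
    (fun p ↦ (cs.simple i * p.1 * cs.simple i, p.2 + if p.1 = cs.simple i then 1 else 0))
    (by
      rintro ⟨u, ε⟩
      have hfix : cs.simple i * u * cs.simple i = cs.simple i ↔ u = cs.simple i := by
        constructor <;> intro h
        · simpa [mul_assoc] using congrArg (cs.simple i * · * cs.simple i) h
        · simp [h]
      ext
      · simp [mul_assoc]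
      · simp only [hfix, add_assoc, CharTwo.add_self_eq_zero, add_zero])

theorem reflectionPerm_apply (i : B) (u : W) (ε : ZMod 2) :
    cs.reflectionPerm i (u, ε) =
      (cs.simple i * u * cs.simple i, ε + if u = cs.simple i then 1 else 0) :=
  rfl

theorem prod_map_reflectionPerm_apply (ω : List B) (u : W) (ε : ZMod 2) :
    (ω.map cs.reflectionPerm).prod (u, ε) =
      (cs.wordProd ω * u * (cs.wordProd ω)⁻¹, ε + (cs.rightInvSeq ω).count u) := by
  induction ω generalizing u ε with
  | nil => simp
  | cons j ω ih =>
    have hhead : cs.wordProd ω * u * (cs.wordProd ω)⁻¹ = cs.simple j ↔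
        ((cs.wordProd ω)⁻¹ * cs.simple j * cs.wordProd ω == u) = true := by
      rw [beq_iff_eq]
      constructor <;> intro h <;> rw [← h] <;> group
    rw [List.map_cons, List.prod_cons, Equiv.Perm.mul_apply, ih, reflectionPerm_apply,
      rightInvSeq, List.count_cons]
    simp only [hhead]
    push_cast
    simp only [wordProd_cons, mul_inv_rev, inv_simple, mul_assoc, add_assoc]

theorem count_rightInvSeq_reverse_alternatingWord (i i' : B) (u : W) :
    (((cs.rightInvSeq (alternatingWord i' i (2 * M i i')).reverse).count u : ℕ) : ZMod 2) = 0 := by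
  -- The inversion sequence is periodic with period `M i i'`, so it lists every entry twice.
  have hperiod : ∀ k, cs.simple i' * (cs.simple i * cs.simple i') ^ (M i i' + k) =
      cs.simple i' * (cs.simple i * cs.simple i') ^ k := by
    simp [pow_add, simple_mul_simple_pow]
  rw [rightInvSeq_reverse, List.count_reverse, leftInvSeq_alternatingWord, two_mul,
    List.range_add, List.map_append, List.map_map]
  simp only [Function.comp_def, hperiod, List.count_append, Nat.cast_add,
    CharTwo.add_self_eq_zero]

theorem isLiftable_reflectionPerm : M.IsLiftable cs.reflectionPerm := by
  intro i i'
  have hprod : cs.wordProd (alternatingWord i' i (2 * M i i')).reverse = 1 := by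
    rw [wordProd, prod_map_reverse_alternatingWord, simple_mul_simple_pow]
  ext ⟨u, ε⟩ : 1
  rw [← prod_map_reverse_alternatingWord, prod_map_reflectionPerm_apply, hprod,
    count_rightInvSeq_reverse_alternatingWord]
  simp

def reflectionRep : W →* Equiv.Perm (W × ZMod 2) :=
  cs.lift ⟨cs.reflectionPerm, cs.isLiftable_reflectionPerm⟩

theorem reflectionRep_wordProd_apply (ω : List B) (u : W) (ε : ZMod 2) :
    cs.reflectionRep (cs.wordProd ω) (u, ε) =
      (cs.wordProd ω * u * (cs.wordProd ω)⁻¹, ε + (cs.rightInvSeq ω).count u) := by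
  rw [← prod_map_reflectionPerm_apply, reflectionRep, wordProd, map_list_prod, List.map_map]
  congr 3
  funext j
  exact cs.lift_apply_simple cs.isLiftable_reflectionPerm j

theorem reflectionRep_apply (x u : W) (ε : ZMod 2) :
    cs.reflectionRep x (u, ε) = (x * u * x⁻¹, ε + (cs.reflectionRep x (u, 0)).2) := by
  obtain ⟨ω, rfl⟩ := cs.wordProd_surjective x
  simp [reflectionRep_wordProd_apply]

theorem reflectionRep_self {t : W} (ht : cs.IsReflection t) (ε : ZMod 2) :
    cs.reflectionRep t (t, ε) = (t, ε + 1) := by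
  obtain ⟨u, k, rfl⟩ := ht
  set a := (cs.reflectionRep u⁻¹ (u * cs.simple k * u⁻¹, 0)).2
  set b := (cs.reflectionRep u (cs.simple k, 0)).2
  have hin : ∀ δ, cs.reflectionRep u⁻¹ (u * cs.simple k * u⁻¹, δ) = (cs.simple k, δ + a) := by
    intro δ; rw [reflectionRep_apply]; simp [a, mul_assoc]
  have hout : ∀ δ, cs.reflectionRep u (cs.simple k, δ) = (u * cs.simple k * u⁻¹, δ + b) :=
    fun δ ↦ reflectionRep_apply ..
  have hab : a + b = 0 := by
    have h := congrArg Prod.snd (congrArg (cs.reflectionRep u) (hin 0))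
    rw [← Equiv.Perm.mul_apply, ← map_mul, mul_inv_cancel, map_one, hout] at h
    simpa using h.symm
  have hsimple : cs.reflectionRep (cs.simple k) = cs.reflectionPerm k :=
    cs.lift_apply_simple cs.isLiftable_reflectionPerm k
  rw [map_mul, map_mul, Equiv.Perm.mul_apply, Equiv.Perm.mul_apply, hin, hsimple,
    reflectionPerm_apply, if_pos rfl, simple_mul_simple_self, one_mul, hout]
  congr 1
  linear_combination hab

end ReflectionCocycle

theorem mem_rightInvSeq_of_length_mul_lt {t : W} (ht : cs.IsReflection t) {ω : List B}
    (h : cs.length (cs.wordProd ω * t) < cs.length (cs.wordProd ω)) :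
    t ∈ cs.rightInvSeq ω := by
  classical
  by_contra hmem
  obtain ⟨σ, hσ, hσω⟩ := cs.exists_isReduced (cs.wordProd ω * t)
  -- Evaluating `reflectionRep (π ω * t)` at `(t, 0)` in two ways compares the parities of the
  -- multiplicities of `t` in the two inversion sequences.
  have hcount : ((cs.rightInvSeq σ).count t : ZMod 2) = 1 := by
    have h := congrArg Prod.snd (congrArg (cs.reflectionRep · (t, 0)) hσω)
    simpa [map_mul, reflectionRep_self cs ht, reflectionRep_wordProd_apply,
      List.count_eq_zero_of_not_mem hmem] using h.symm
  have hσmem : t ∈ cs.rightInvSeq σ := by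
    by_contra h'
    simp [List.count_eq_zero_of_not_mem h'] at hcount
  have hinv := (cs.isRightInversion_of_mem_rightInvSeq hσ hσmem).2
  rw [← hσω, mul_assoc, ht.mul_self, mul_one] at hinv
  omega

theorem exists_wordProd_mul_eq_wordProd_eraseIdx {t : W} (ht : cs.IsReflection t) {ω : List B}
    (h : cs.length (cs.wordProd ω * t) < cs.length (cs.wordProd ω)) :
    ∃ k < ω.length, cs.wordProd ω * t = cs.wordProd (ω.eraseIdx k) := by
  obtain ⟨k, hk, hkt⟩ := List.mem_iff_getElem.mp (cs.mem_rightInvSeq_of_length_mul_lt ht h)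
  refine ⟨k, by simpa using hk, ?_⟩
  rw [← wordProd_mul_getD_rightInvSeq, List.getD_eq_getElem _ _ hk, hkt]

theorem eq_or_length_mul_lt_of_length_simple_mul_mul_lt {t : W} (ht : cs.IsReflection t)
    (i : B) (y : W)
    (h : cs.length (cs.simple i * y * t) < cs.length (cs.simple i * y)) :
    cs.simple i * y * t = y ∨ cs.length (y * t) < cs.length y := by
  obtain ⟨σ, hσ, rfl⟩ := cs.exists_isReduced y
  rw [← wordProd_cons] at h ⊢
  obtain ⟨k, hk, hkt⟩ := cs.exists_wordProd_mul_eq_wordProd_eraseIdx ht h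
  rcases k with _ | k
  · exact Or.inl hkt
  · right
    have hk' : k < σ.length := by simpa using hk
    have hdel : cs.wordProd σ * t = cs.wordProd (σ.eraseIdx k) := by
      simpa [wordProd_cons, mul_assoc] using hkt
    calc cs.length (cs.wordProd σ * t)
        _ = cs.length (cs.wordProd (σ.eraseIdx k)) := by rw [hdel]
        _ ≤ (σ.eraseIdx k).length := cs.length_wordProd_le _
        _ < σ.length := by rw [List.length_eraseIdx_of_lt hk']; omega
        _ = cs.length (cs.wordProd σ) := hσ.symm

end CoxeterSystem

theorem IsMinimalCosetRep.of_simple_mul {B W : Type*} [Group W] {M : CoxeterMatrix B}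
    {cs : CoxeterSystem M W} {S : Set B} {w : W} {i : B}
    (hlen : cs.length (cs.simple i * w) = cs.length w + 1)
    (h : IsMinimalCosetRep cs S (cs.simple i * w)) : IsMinimalCosetRep cs S w := by
  intro j hj
  refine (cs.length_mul_simple w j).resolve_right fun hdown ↦ ?_
  have hle := cs.length_mul_le (cs.simple i) (w * cs.simple j)
  rw [cs.length_simple, ← mul_assoc, h j hj] at hle
  omega

theorem statement4_general {B : Type*} {W : Type*} [Group W] {M : CoxeterMatrix B}
    (cs : CoxeterSystem M W) (S : Set B) (w t : W) (i : B)
    (ht : cs.IsReflection t)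
    (htop : cs.length (cs.simple i * w * t) = cs.length w + 2)
    (hweak : cs.length (cs.simple i * w) = cs.length w + 1)
    (hstrong : cs.length (w * t) = cs.length w + 1)
    (hwt : IsMinimalCosetRep cs S (w * t))
    (hsw : IsMinimalCosetRep cs S (cs.simple i * w)) :
    IsMinimalCosetRep cs S w ∧ IsMinimalCosetRep cs S (cs.simple i * w * t) := by
  have hw : IsMinimalCosetRep cs S w := hsw.of_simple_mul hweak
  refine ⟨hw, fun j hj ↦ (cs.length_mul_simple _ j).resolve_right fun hdown ↦ ?_⟩
  set r := cs.simple j * t * (cs.simple j)⁻¹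
  have hr : cs.IsReflection r := ht.conj _
  have hvr : cs.simple i * (w * cs.simple j) * r = cs.simple i * w * t * cs.simple j := by
    simp [r, mul_assoc]
  have hlt : cs.length (cs.simple i * (w * cs.simple j) * r) <
      cs.length (cs.simple i * (w * cs.simple j)) := by
    rw [hvr, ← mul_assoc, hsw j hj]
    omega
  rcases cs.eq_or_length_mul_lt_of_length_simple_mul_mul_lt hr i _ hlt with heq | hshort
  · rw [hvr, mul_left_inj] at heq
    rw [heq] at htop
    omega
  · have hwr : w * cs.simple j * r = w * t * cs.simple j := by simp [r, mul_assoc]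
    rw [hwr, hwt j hj, hw j hj] at hshort
    omega

theorem statement4 {B : Type*} {W : Type*} [Group W] {M : CoxeterMatrix B}
    (cs : CoxeterSystem M W) (S : Set B) (w t : W) (i : B)
    (ht : cs.IsReflection t)
    (hne : cs.simple i * w ≠ w * t)
    (htop : cs.length (cs.simple i * w * t) = cs.length w + 2)
    (hweak : cs.length (cs.simple i * w) = cs.length w + 1)
    (hstrong : cs.length (w * t) = cs.length w + 1)
    (hwt : IsMinimalCosetRep cs S (w * t))
    (hsw : IsMinimalCosetRep cs S (cs.simple i * w)) :
    IsMinimalCosetRep cs S w ∧ IsMinimalCosetRep cs S (cs.simple i * w * t) :=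
  statement4_general cs S w t i ht htop hweak hstrong hwt hsw
end

section
/- The group Spin₇ (equivalently SO₇, acting via its vector representation on a 7-dimensional quadratic space) has a dense orbit on the product OG(2,7) × OG(2,7) × OG(3,7) of orthogonal isotropic Grassmannians. Concretely, for the standard quadratic form with ⟨e_i, e_j⟩ ≠ 0 iff i + j = 8, the stabilizer in SO₇ of the triple (span(e₁,e₂), span(e₆,e₇), span(e₁+e₃, e₅−e₇, e₂+e₄−e₆)) is 1-dimensional, and dim(OG(2,7)² × OG(3,7)) = 20 = dim SO₇ − 1. -/
/-!
STATEMENT 17 (Remark `rema:dense-orbit`).  On `ℂ⁷` with the symmetric bilinear form given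
by `⟨e_i, e_j⟩ ≠ 0 iff i + j = 8` (1-based; with 0-based indices `i + j = 6`), consider the
isotropic subspaces `U₁ = span(e₁, e₂)`, `U₂ = span(e₆, e₇)` and
`U₃ = span(e₁+e₃, e₅−e₇, e₂+e₄−e₆)`.  The statement that `Spin₇` (equivalently `SO₇`) has a
dense orbit on `OG(2,7) × OG(2,7) × OG(3,7)` amounts to the stabilizer of the triple
`(U₁, U₂, U₃)` being 1-dimensional, since
`dim(OG(2,7)² × OG(3,7)) = 20 = dim SO₇ − 1 = 21 − 1`.

We formalize the dimension computation infinitesimally: the Lie algebra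
`𝔰𝔬₇ = {X : Xᵀ J + J X = 0}` (of dimension 21) of the stabilizer of the form, intersected
with the stabilizers of `U₁`, `U₂`, `U₃`, is a 1-dimensional subspace, and
`dim 𝔰𝔬₇ = 21 = 20 + 1`.
-/

open Matrix

/-- The Gram matrix of the bilinear form: `J i j = 1` iff `i + j = 6` (0-based). -/
noncomputable def formJ : Matrix (Fin 7) (Fin 7) ℂ :=
  Matrix.of fun i j => if (i : ℕ) + (j : ℕ) = 6 then 1 else 0

/-- The linear map `X ↦ Xᵀ J + J X`, whose kernel is `𝔰𝔬₇`. -/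
noncomputable def soMap : Matrix (Fin 7) (Fin 7) ℂ →ₗ[ℂ] Matrix (Fin 7) (Fin 7) ℂ where
  toFun X := Xᵀ * formJ + formJ * X
  map_add' X Y := by
    simp [Matrix.transpose_add, Matrix.add_mul, Matrix.mul_add]; abel
  map_smul' c X := by
    simp [Matrix.transpose_smul, Matrix.smul_mul, Matrix.mul_smul]

/-- The Lie algebra `𝔰𝔬₇` of the orthogonal group of the form `J`. -/
noncomputable def so7 : Submodule ℂ (Matrix (Fin 7) (Fin 7) ℂ) := LinearMap.ker soMap

/-- The infinitesimal stabilizer of a subspace `U ⊆ ℂ⁷`: matrices mapping `U` into `U`. -/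
noncomputable def stabilizer (U : Submodule ℂ (Fin 7 → ℂ)) : Submodule ℂ (Matrix (Fin 7) (Fin 7) ℂ) where
  carrier := {X | ∀ u ∈ U, X.mulVec u ∈ U}
  zero_mem' := by intro u hu; simp [Matrix.zero_mulVec, U.zero_mem]
  add_mem' := by
    intro X Y hX hY u hu
    simpa [Matrix.add_mulVec] using U.add_mem (hX u hu) (hY u hu)
  smul_mem' := by
    intro c X hX u hu
    simpa [Matrix.smul_mulVec] using U.smul_mem c (hX u hu)

/-- Standard basis vector of `ℂ⁷`. -/
noncomputable def e (i : Fin 7) : Fin 7 → ℂ := Pi.single i 1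

/-- `U₁ = span(e₁, e₂)` (1-based), an isotropic 2-plane. -/
noncomputable def U1 : Submodule ℂ (Fin 7 → ℂ) := Submodule.span ℂ {e 0, e 1}

/-- `U₂ = span(e₆, e₇)` (1-based), an isotropic 2-plane. -/
noncomputable def U2 : Submodule ℂ (Fin 7 → ℂ) := Submodule.span ℂ {e 5, e 6}

/-- `U₃ = span(e₁+e₃, e₅−e₇, e₂+e₄−e₆)` (1-based), an isotropic 3-plane. -/
noncomputable def U3 : Submodule ℂ (Fin 7 → ℂ) :=
  Submodule.span ℂ {e 0 + e 2, e 4 - e 6, e 1 + e 3 - e 5}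

/-!
An element of `𝔰𝔬₇` preserving the isotropic planes `U₁` and `U₂`, which the form puts in
duality, also preserves `W = (U₁ ⊕ U₂)ᗮ = span(e₃, e₄, e₅)`; so it lies in the seven-dimensional
Levi factor `𝔤𝔩(U₁) × 𝔰𝔬(W)`. The plane `U₃` is the graph of a linear map `W → U₁ ⊕ U₂`, and an
element of the Levi factor preserves this graph only if it is a multiple of
`diag(1, 0, 1, 0, -1, 0, -1)`.

Since `J` is a symmetric involution, `X ↦ J X` maps `𝔰𝔬₇` onto the skew-symmetric matrices,
whose dimension is the number `7 · 6 / 2 = 21` of entries above the diagonal.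
-/

open Module Submodule

section SkewAdjoint

variable {K n : Type*} [Field K] [Fintype n] [DecidableEq n]

theorem mem_skewAdjointMatricesSubmodule_one {A : Matrix n n K} :
    A ∈ skewAdjointMatricesSubmodule (1 : Matrix n n K) ↔ Aᵀ = -A := by
  simp [Matrix.IsSkewAdjoint, Matrix.IsAdjointPair]

theorem mem_skewAdjointMatricesSubmodule_iff_mul_mem_one {J A : Matrix n n K} (hJt : Jᵀ = J) :
    A ∈ skewAdjointMatricesSubmodule J ↔
      J * A ∈ skewAdjointMatricesSubmodule (1 : Matrix n n K) := by
  rw [mem_skewAdjointMatricesSubmodule_one, mem_skewAdjointMatricesSubmodule,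
    Matrix.IsSkewAdjoint, Matrix.IsAdjointPair, transpose_mul, hJt, Matrix.mul_neg]

theorem finrank_skewAdjointMatricesSubmodule_eq_finrank_one {J : Matrix n n K} (hJt : Jᵀ = J)
    (hJJ : J * J = 1) :
    finrank K (skewAdjointMatricesSubmodule J) =
      finrank K (skewAdjointMatricesSubmodule (1 : Matrix n n K)) := by
  let e : Matrix n n K ≃ₗ[K] Matrix n n K :=
    LinearEquiv.ofInvolutive (LinearMap.mulLeft K J) fun A => by
      simp [← Matrix.mul_assoc, hJJ]
  have hmap : (skewAdjointMatricesSubmodule J).map (e : Matrix n n K →ₗ[K] Matrix n n K) =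
      skewAdjointMatricesSubmodule 1 := by
    ext A
    rw [mem_map_equiv, mem_skewAdjointMatricesSubmodule_iff_mul_mem_one hJt]
    change J * (J * A) ∈ _ ↔ _
    rw [← Matrix.mul_assoc, hJJ, Matrix.one_mul]
  rw [← hmap, e.finrank_map_eq]

variable [LinearOrder n]

theorem finrank_skewAdjointMatricesSubmodule_one (hK : ringChar K ≠ 2) :
    finrank K (skewAdjointMatricesSubmodule (1 : Matrix n n K)) =
      Fintype.card {p : n × n // p.1 < p.2} := by
  let upperEntries : skewAdjointMatricesSubmodule (1 : Matrix n n K) →ₗ[K]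
      ({p : n × n // p.1 < p.2} → K) :=
    (LinearMap.pi fun p => entryLinearMap K K p.1.1 p.1.2) ∘ₗ Submodule.subtype _
  have hinj : Function.Injective upperEntries := by
    rw [injective_iff_map_eq_zero]
    rintro ⟨A, hA⟩ hupper
    have hskew : ∀ i j, A j i = -A i j := fun i j => by
      simpa using congr_fun (congr_fun (mem_skewAdjointMatricesSubmodule_one.1 hA) i) j
    have hzero : ∀ i j, i < j → A i j = 0 := fun i j h => congr_fun hupper ⟨(i, j), h⟩
    ext i j
    rcases lt_trichotomy i j with h | rfl | h
    · exact hzero i j h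
    · exact (Ring.eq_self_iff_eq_zero_of_char_ne_two hK).1 (hskew i i).symm
    · simp [hskew j i, hzero j i h]
  have hsurj : Function.Surjective upperEntries := by
    intro g
    let A : Matrix n n K := Matrix.of fun i j =>
      if h : i < j then g ⟨(i, j), h⟩ else if h' : j < i then -g ⟨(j, i), h'⟩ else 0
    have hA : A ∈ skewAdjointMatricesSubmodule (1 : Matrix n n K) := by
      rw [mem_skewAdjointMatricesSubmodule_one]
      ext i j
      rcases lt_trichotomy i j with h | rfl | h
      · simp [A, h, h.not_gt]
      · simp [A]
      · simp [A, h, h.not_gt]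
    exact ⟨⟨A, hA⟩, funext fun p => by simp [upperEntries, A, p.2]⟩
  rw [(LinearEquiv.ofBijective upperEntries ⟨hinj, hsurj⟩).finrank_eq,
    finrank_fintype_fun_eq_card]

end SkewAdjoint

theorem formJ_apply (i j : Fin 7) : formJ i j = if j = i.rev then 1 else 0 := by
  have hiff : (i : ℕ) + j = 6 ↔ j = i.rev := by
    rw [Fin.ext_iff, Fin.val_rev]
    omega
  simp only [formJ, of_apply, hiff]

theorem formJ_mul_apply (X : Matrix (Fin 7) (Fin 7) ℂ) (i j : Fin 7) :
    (formJ * X) i j = X i.rev j := by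
  simp [mul_apply, formJ_apply]

theorem formJ_transpose : formJᵀ = formJ := by
  ext i j
  simp only [transpose_apply, formJ_apply, eq_comm (a := j), Fin.rev_eq_iff]

theorem formJ_mul_formJ : formJ * formJ = 1 := by
  ext i j
  simp [formJ_mul_apply, formJ_apply, one_apply, eq_comm]

theorem so7_eq_skewAdjointMatricesSubmodule : so7 = skewAdjointMatricesSubmodule formJ := by
  ext X
  rw [so7, LinearMap.mem_ker, mem_skewAdjointMatricesSubmodule, Matrix.IsSkewAdjoint,
    Matrix.IsAdjointPair, Matrix.mul_neg, ← add_eq_zero_iff_eq_neg]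
  rfl

theorem finrank_so7 : finrank ℂ so7 = 21 := by
  rw [so7_eq_skewAdjointMatricesSubmodule,
    finrank_skewAdjointMatricesSubmodule_eq_finrank_one formJ_transpose formJ_mul_formJ,
    finrank_skewAdjointMatricesSubmodule_one (by simp)]
  decide

theorem mem_so7_iff {X : Matrix (Fin 7) (Fin 7) ℂ} : X ∈ so7 ↔ ∀ i j, X j.rev i = -X i.rev j := by
  rw [so7_eq_skewAdjointMatricesSubmodule,
    mem_skewAdjointMatricesSubmodule_iff_mul_mem_one formJ_transpose,
    mem_skewAdjointMatricesSubmodule_one, ← Matrix.ext_iff]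
  simp [formJ_mul_apply]

theorem mem_stabilizer_iff_forall_mulVec_mem {S : Set (Fin 7 → ℂ)} {U : Submodule ℂ (Fin 7 → ℂ)}
    (hU : span ℂ S = U) {X : Matrix (Fin 7) (Fin 7) ℂ} :
    X ∈ stabilizer U ↔ ∀ s ∈ S, X *ᵥ s ∈ U := by
  subst hU
  exact span_le (p := (span ℂ S).comap X.mulVecLin)

theorem mem_U1_iff {v : Fin 7 → ℂ} : v ∈ U1 ↔ ∀ i, 2 ≤ i → v i = 0 := by
  rw [U1, mem_span_pair]
  constructor
  · rintro ⟨a, b, rfl⟩ i hi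
    fin_cases i <;> simp_all [e]
  · intro h
    refine ⟨v 0, v 1, funext fun i => ?_⟩
    fin_cases i <;> simp [e, h]

theorem mem_U2_iff {v : Fin 7 → ℂ} : v ∈ U2 ↔ ∀ i, i ≤ 4 → v i = 0 := by
  rw [U2, mem_span_pair]
  constructor
  · rintro ⟨a, b, rfl⟩ i hi
    fin_cases i <;> simp_all [e]
  · intro h
    refine ⟨v 5, v 6, funext fun i => ?_⟩
    fin_cases i <;> simp [e, h]

theorem mem_U3_iff {v : Fin 7 → ℂ} :
    v ∈ U3 ↔ v 2 = v 0 ∧ v 3 = v 1 ∧ v 5 = -v 1 ∧ v 6 = -v 4 := by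
  rw [U3, mem_span_triple]
  constructor
  · rintro ⟨a, b, c, rfl⟩
    simp [e]
  · rintro ⟨h2, h3, h5, h6⟩
    refine ⟨v 0, v 4, v 1, funext fun i => ?_⟩
    fin_cases i <;> simp [e, h2, h3, h5, h6]

theorem mem_stabilizer_U1_iff {X : Matrix (Fin 7) (Fin 7) ℂ} :
    X ∈ stabilizer U1 ↔ ∀ i, 2 ≤ i → X i 0 = 0 ∧ X i 1 = 0 := by
  rw [mem_stabilizer_iff_forall_mulVec_mem (U := U1) rfl]
  simp [mem_U1_iff, e, forall_and]

theorem mem_stabilizer_U2_iff {X : Matrix (Fin 7) (Fin 7) ℂ} :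
    X ∈ stabilizer U2 ↔ ∀ i, i ≤ 4 → X i 5 = 0 ∧ X i 6 = 0 := by
  rw [mem_stabilizer_iff_forall_mulVec_mem (U := U2) rfl]
  simp [mem_U2_iff, e, forall_and]

section Levi

-- On `U₂ ≅ U₁*` (dual basis `e₇, e₆`) the block is minus the transpose of the `𝔤𝔩(U₁)` block
-- `!![a, b; c, d]`; the middle block is in `𝔰𝔬(W)`.
def leviMatrix (a b c d p q r : ℂ) : Matrix (Fin 7) (Fin 7) ℂ :=
  !![a, b, 0, 0, 0, 0, 0;
     c, d, 0, 0, 0, 0, 0;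
     0, 0, p, q, 0, 0, 0;
     0, 0, r, 0, -q, 0, 0;
     0, 0, 0, -r, -p, 0, 0;
     0, 0, 0, 0, 0, -d, -b;
     0, 0, 0, 0, 0, -c, -a]

variable {a b c d p q r : ℂ}

theorem leviMatrix_mem_so7 : leviMatrix a b c d p q r ∈ so7 := by
  rw [mem_so7_iff]
  intro i j
  fin_cases i <;> fin_cases j <;> simp [leviMatrix]

theorem leviMatrix_mem_stabilizer_U1 : leviMatrix a b c d p q r ∈ stabilizer U1 := by
  rw [mem_stabilizer_U1_iff]
  intro i hi
  fin_cases i <;> simp_all [leviMatrix]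

theorem leviMatrix_mem_stabilizer_U2 : leviMatrix a b c d p q r ∈ stabilizer U2 := by
  rw [mem_stabilizer_U2_iff]
  intro i hi
  fin_cases i <;> simp_all [leviMatrix]

theorem leviMatrix_mem_stabilizer_U3_iff :
    leviMatrix a b c d p q r ∈ stabilizer U3 ↔
      b = 0 ∧ c = 0 ∧ d = 0 ∧ q = 0 ∧ r = 0 ∧ p = a := by
  have h02 : leviMatrix a b c d p q r *ᵥ (e 0 + e 2) = ![a, c, p, r, 0, 0, 0] := by
    ext i
    fin_cases i <;> simp [leviMatrix, e, mulVec_add]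
  have h46 : leviMatrix a b c d p q r *ᵥ (e 4 - e 6) = ![0, 0, 0, -q, -p, b, a] := by
    ext i
    fin_cases i <;> simp [leviMatrix, e, mulVec_sub]
  have h135 : leviMatrix a b c d p q r *ᵥ (e 1 + e 3 - e 5) = ![b, d, q, 0, -r, d, c] := by
    ext i
    fin_cases i <;> simp [leviMatrix, e, mulVec_add, mulVec_sub]
  rw [mem_stabilizer_iff_forall_mulVec_mem (U := U3) rfl]
  simp only [Set.mem_insert_iff, Set.mem_singleton_iff, forall_eq_or_imp, forall_eq, h02, h46,
    h135, mem_U3_iff, cons_val]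
  grind

theorem eq_leviMatrix_of_mem {X : Matrix (Fin 7) (Fin 7) ℂ} (hso : X ∈ so7)
    (h1 : X ∈ stabilizer U1) (h2 : X ∈ stabilizer U2) :
    X = leviMatrix (X 0 0) (X 0 1) (X 1 0) (X 1 1) (X 2 2) (X 2 3) (X 3 2) := by
  rw [mem_so7_iff] at hso
  rw [mem_stabilizer_U1_iff] at h1
  rw [mem_stabilizer_U2_iff] at h2
  ext i j
  have hij : X i j = -X j.rev i.rev := by rw [hso, Fin.rev_rev, neg_neg]
  -- An entry is a parameter, or minus its mirror entry, which is a parameter or killed by `h1` or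
  -- `h2`; an antidiagonal entry is its own mirror, hence zero.
  fin_cases i <;> fin_cases j <;> simp [leviMatrix] at hij ⊢ <;> grind

end Levi

theorem so7_inf_stabilizers_eq_span :
    so7 ⊓ stabilizer U1 ⊓ stabilizer U2 ⊓ stabilizer U3 = span ℂ {leviMatrix 1 0 0 0 1 0 0} := by
  apply le_antisymm
  · rintro X ⟨⟨⟨hso, h1⟩, h2⟩, h3⟩
    rw [eq_leviMatrix_of_mem hso h1 h2] at h3 ⊢
    obtain ⟨hb, hc, hd, hq, hr, hp⟩ := leviMatrix_mem_stabilizer_U3_iff.1 h3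
    refine mem_span_singleton.2 ⟨X 0 0, ?_⟩
    ext i j
    fin_cases i <;> fin_cases j <;> simp [leviMatrix, hb, hc, hd, hq, hr, hp]
  · rw [span_singleton_le_iff_mem]
    exact ⟨⟨⟨leviMatrix_mem_so7, leviMatrix_mem_stabilizer_U1⟩, leviMatrix_mem_stabilizer_U2⟩,
      leviMatrix_mem_stabilizer_U3_iff.2 ⟨rfl, rfl, rfl, rfl, rfl, rfl⟩⟩

theorem statement17 :
    Module.finrank ℂ ↥(so7 ⊓ stabilizer U1 ⊓ stabilizer U2 ⊓ stabilizer U3) = 1 ∧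
    Module.finrank ℂ ↥so7 = 21 ∧ (20 = 21 - 1) := by
  refine ⟨?_, finrank_so7, rfl⟩
  rw [so7_inf_stabilizers_eq_span]
  refine finrank_span_singleton fun h => ?_
  simpa [leviMatrix] using congr_fun (congr_fun h 0) 0
end
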